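/- In a one-dimensional ISAC network with K nodes and nonempty sensing link set U(A), for any fixed throughput f with 0 ≤ f ≤ f*, the maximum sensing fidelity compatible with throughput f is max{s : (s, f) ∈ R} = Σ_{u ∈ U(A)} c_u − |U(A)| · f. -/

import Mathlib

/-- An ISAC network on a finite node type `V`: a symmetric, irreflexive set of
directed links `E`, a source `Tx`, a sink `Rx`, a nonnegative capacity `c` on
undirected links (unordered pairs), and a sensing region `A`. -/
structure ISACNetwork (V : Type) [Fintype V] [DecidableEq V] where
  E : Finset (V × V)
  symm : ∀ i j : V, (i, j) ∈ E → (j, i) ∈ E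
  irrefl : ∀ i : V, (i, i) ∉ E
  Tx : V
  Rx : V
  TxNeRx : Tx ≠ Rx
  c : Sym2 V → ℝ
  c_nonneg : ∀ u : Sym2 V, 0 ≤ c u
  A : Finset V

namespace ISACNetwork

variable {V : Type} [Fintype V] [DecidableEq V]

/-- `E(A)`: directed links with both endpoints in the sensing region. -/
def EA (N : ISACNetwork V) : Finset (V × V) :=
  N.E.filter fun e => e.1 ∈ N.A ∧ e.2 ∈ N.A

/-- `U(A)`: undirected links with both endpoints in the sensing region. -/
def UA (N : ISACNetwork V) : Finset (Sym2 V) :=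
  N.EA.image (fun e => s(e.1, e.2))

/-- A valid assignment of communication rates `f` and sensing rates `s`:
nonnegative rates for which there is a nonnegative capacity split `ca` of the
undirected link capacities with `f e + s e ≤ ca e` on each directed link, no
communication into the source or out of the sink, and flow conservation at
every intermediate node. -/
def Valid (N : ISACNetwork V) (f s : V × V → ℝ) : Prop :=
  (∀ e ∈ N.E, 0 ≤ f e) ∧ (∀ e ∈ N.E, 0 ≤ s e) ∧
  ∃ ca : V × V → ℝ,
    (∀ e ∈ N.E, 0 ≤ ca e) ∧
    (∀ i j : V, (i, j) ∈ N.E → ca (i, j) + ca (j, i) = N.c s(i, j)) ∧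
    (∀ e ∈ N.E, f e + s e ≤ ca e) ∧
    (∀ i : V, (i, N.Tx) ∈ N.E → f (i, N.Tx) = 0) ∧
    (∀ j : V, (N.Rx, j) ∈ N.E → f (N.Rx, j) = 0) ∧
    (∀ j : V, j ≠ N.Tx → j ≠ N.Rx →
      ∑ i ∈ Finset.univ.filter (fun i => (i, j) ∈ N.E), f (i, j)
        = ∑ k ∈ Finset.univ.filter (fun k => (j, k) ∈ N.E), f (j, k))

/-- The sensing fidelity achieved by a sensing-rate assignment. -/
def sensOf (N : ISACNetwork V) (s : V × V → ℝ) : ℝ := ∑ e ∈ N.EA, s e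

/-- The throughput achieved by a communication-rate assignment. -/
def flowOf (N : ISACNetwork V) (f : V × V → ℝ) : ℝ :=
  ∑ j ∈ Finset.univ.filter (fun j => (N.Tx, j) ∈ N.E), f (N.Tx, j)

/-- The sensing–throughput region: all pairs `(s, f)` achieved by a valid
assignment. -/
def Region (N : ISACNetwork V) : Set (ℝ × ℝ) :=
  { p | ∃ fr sr : V × V → ℝ, N.Valid fr sr ∧ N.sensOf sr = p.1 ∧ N.flowOf fr = p.2 }

end ISACNetwork

/-- The one-dimensional ISAC network with `K ≥ 2` nodes: nodes `0, …, K-1`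
(standing for `1, …, K`), links between consecutive nodes in both directions,
source node `0` and sink node `K-1`. -/
def pathNetwork (K : ℕ) (hK : 2 ≤ K) (cap : Sym2 (Fin K) → ℝ)
    (hcap : ∀ u, 0 ≤ cap u) (A : Finset (Fin K)) : ISACNetwork (Fin K) where
  E := Finset.univ.filter fun e : Fin K × Fin K =>
    e.1.val + 1 = e.2.val ∨ e.2.val + 1 = e.1.val
  symm := by
    intro i j h
    simp only [Finset.mem_filter, Finset.mem_univ, true_and] at h ⊢
    tauto
  irrefl := by
    intro i h
    simp only [Finset.mem_filter, Finset.mem_univ, true_and] at h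
    omega
  Tx := ⟨0, by omega⟩
  Rx := ⟨K - 1, by omega⟩
  TxNeRx := by
    rw [Fin.ne_iff_vne]
    simp only [ne_eq]
    omega
  c := cap
  c_nonneg := hcap
  A := A

/-- `c_min`: the smallest undirected link capacity of the one-dimensional
ISAC network, `min_{1 ≤ j ≤ K-1} c_{{j,j+1}}`. -/
noncomputable def cmin (K : ℕ) (hK : 2 ≤ K) (cap : Sym2 (Fin K) → ℝ) : ℝ :=
  (Finset.univ : Finset (Fin (K - 1))).inf'
    (Finset.univ_nonempty_iff.mpr ⟨⟨0, by omega⟩⟩)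
    (fun j => cap s(⟨j.val, by have := j.isLt; omega⟩,
      ⟨j.val + 1, by have := j.isLt; omega⟩))

/-!
Flow conservation along the path forces the net flow `f (j, j+1) - f (j+1, j)` across every
link to equal the throughput, so the two orientations of a link together carry at least the
throughput and leave at most `c - f` of its capacity for sensing; summing over the sensing links
gives the upper bound. Conversely, sending `f` forward on every link and sensing with the
remaining `c - f` attains it. This is feasible because `f ≤ f*` and every achievable throughput
is bounded by every link capacity.
-/

namespace ISACNetwork

variable {V : Type} [Fintype V] [DecidableEq V] {N : ISACNetwork V}

lemma mem_EA_swap {i j : V} (h : (i, j) ∈ N.EA) : (j, i) ∈ N.EA := by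
  simp only [EA, Finset.mem_filter] at h ⊢
  exact ⟨N.symm _ _ h.1, h.2.2, h.2.1⟩

lemma filter_EA_mk_eq {i j : V} (h : (i, j) ∈ N.EA) :
    {e ∈ N.EA | s(e.1, e.2) = s(i, j)} = {(i, j), (j, i)} := by
  ext ⟨x, y⟩
  simp only [Finset.mem_filter, Finset.mem_insert, Finset.mem_singleton, Sym2.eq_iff,
    Prod.mk.injEq]
  constructor
  · exact fun h => h.2
  · rintro (⟨rfl, rfl⟩ | ⟨rfl, rfl⟩)
    · exact ⟨h, Or.inl ⟨rfl, rfl⟩⟩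
    · exact ⟨mem_EA_swap h, Or.inr ⟨rfl, rfl⟩⟩

theorem sum_EA_eq_sum_UA (N : ISACNetwork V) (g : V × V → ℝ) :
    ∑ e ∈ N.EA, g e =
      ∑ u ∈ N.UA, Sym2.lift ⟨fun i j => g (i, j) + g (j, i), fun _ _ => add_comm _ _⟩ u := by
  refine (Finset.sum_image' g ?_).symm
  rintro ⟨i, j⟩ h
  have hij : (i, j) ≠ (j, i) := by
    rintro ⟨rfl⟩
    exact N.irrefl i (Finset.mem_filter.mp h).1
  rw [filter_EA_mk_eq h, Finset.sum_pair hij, Sym2.lift_mk]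

theorem Valid.flow_add_sens_le {fr sr : V × V → ℝ} (hv : N.Valid fr sr) {i j : V}
    (hij : (i, j) ∈ N.E) :
    fr (i, j) + fr (j, i) + (sr (i, j) + sr (j, i)) ≤ N.c s(i, j) := by
  obtain ⟨-, -, ca, -, hsplit, hle, -⟩ := hv
  have := hle _ hij
  have := hle _ (N.symm _ _ hij)
  linarith [hsplit i j hij]

end ISACNetwork

namespace pathNetwork

variable {K : ℕ} (hK : 2 ≤ K) (cap : Sym2 (Fin K) → ℝ) (hcap : ∀ u, 0 ≤ cap u)
  (A : Finset (Fin K))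

local notation "𝒫" => pathNetwork K hK cap hcap A

lemma mem_E {i j : Fin K} : (i, j) ∈ (𝒫).E ↔ i.val + 1 = j.val ∨ j.val + 1 = i.val := by
  simp [pathNetwork]

lemma filter_mem_E_eq {i j k : Fin K} (hij : i.val + 1 = j.val) (hjk : j.val + 1 = k.val) :
    ({x | (x, j) ∈ (𝒫).E} : Finset (Fin K)) = {i, k} ∧
      ({x | (j, x) ∈ (𝒫).E} : Finset (Fin K)) = {i, k} := by
  constructor <;>
  · ext x
    simp only [Finset.mem_filter, Finset.mem_univ, true_and, mem_E, Finset.mem_insert,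
      Finset.mem_singleton, Fin.ext_iff]
    omega

lemma flowOf_eq (fr : Fin K × Fin K → ℝ) : (𝒫).flowOf fr = fr (⟨0, by omega⟩, ⟨1, hK⟩) := by
  have : ({x | ((𝒫).Tx, x) ∈ (𝒫).E} : Finset (Fin K)) = {⟨1, hK⟩} := by
    ext x
    simp only [Finset.mem_filter, Finset.mem_univ, true_and, Finset.mem_singleton,
      Fin.ext_iff, pathNetwork]
    omega
  rw [ISACNetwork.flowOf, this, Finset.sum_singleton]
  rfl

variable {hK cap hcap A}

theorem flowOf_eq_sub {fr sr : Fin K × Fin K → ℝ} (hv : (𝒫).Valid fr sr) :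
    ∀ {i j : Fin K}, i.val + 1 = j.val → (𝒫).flowOf fr = fr (i, j) - fr (j, i) := by
  obtain ⟨-, -, -, -, -, -, hTx, -, hcons⟩ := hv
  rintro ⟨n, hn⟩ j hj
  induction n generalizing j with
  | zero =>
    obtain rfl : j = ⟨1, hK⟩ := Fin.ext hj.symm
    have hback : fr (⟨1, hK⟩, ⟨0, hn⟩) = 0 := hTx _ ((mem_E hK cap hcap A).2 (Or.inr rfl))
    rw [flowOf_eq, hback, sub_zero]
  | succ n ih =>
    have hprev : (⟨n, by omega⟩ : Fin K).val + 1 = (⟨n + 1, hn⟩ : Fin K).val := rfl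
    obtain ⟨hin, hout⟩ := filter_mem_E_eq hK cap hcap A hprev hj
    have hjK : n + 2 < K := hj ▸ j.isLt
    have hne : (⟨n, by omega⟩ : Fin K) ≠ j := Fin.ne_of_val_ne (by rw [← hj]; simp; omega)
    have hbal := hcons ⟨n + 1, hn⟩ (by simp [pathNetwork]) (by simp [pathNetwork]; omega)
    rw [hin, hout, Finset.sum_pair hne, Finset.sum_pair hne] at hbal
    rw [ih (by omega) hprev]
    linarith

theorem sens_add_sens_le {fr sr : Fin K × Fin K → ℝ} (hv : (𝒫).Valid fr sr) {i j : Fin K}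
    (hij : (i, j) ∈ (𝒫).E) : sr (i, j) + sr (j, i) ≤ cap s(i, j) - (𝒫).flowOf fr := by
  have hfr := hv.1
  have hlink : fr (i, j) + fr (j, i) + (sr (i, j) + sr (j, i)) ≤ cap s(i, j) :=
    hv.flow_add_sens_le hij
  rcases (mem_E hK cap hcap A).1 hij with h | h
  · linarith [flowOf_eq_sub hv h, hfr _ ((𝒫).symm _ _ hij)]
  · linarith [flowOf_eq_sub hv h, hfr _ hij]

theorem flowOf_le_cap {fr sr : Fin K × Fin K → ℝ} (hv : (𝒫).Valid fr sr) {i j : Fin K}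
    (hij : (i, j) ∈ (𝒫).E) : (𝒫).flowOf fr ≤ cap s(i, j) := by
  linarith [sens_add_sens_le hv hij, hv.2.1 _ hij, hv.2.1 _ ((𝒫).symm _ _ hij)]

theorem sensOf_le {fr sr : Fin K × Fin K → ℝ} (hv : (𝒫).Valid fr sr) :
    (𝒫).sensOf sr ≤ ∑ u ∈ (𝒫).UA, (cap u - (𝒫).flowOf fr) := by
  rw [ISACNetwork.sensOf, ISACNetwork.sum_EA_eq_sum_UA]
  refine Finset.sum_le_sum fun u hu => ?_
  obtain ⟨⟨i, j⟩, hij, rfl⟩ := Finset.mem_image.mp hu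
  exact sens_add_sens_le hv (Finset.mem_filter.mp hij).1

def onForward (r : Fin K × Fin K → ℝ) (e : Fin K × Fin K) : ℝ :=
  if e.1.val + 1 = e.2.val then r e else 0

lemma onForward_add_onForward_swap {r : Fin K × Fin K → ℝ} (hr : ∀ i j, r (i, j) = r (j, i))
    {i j : Fin K} (hij : i.val + 1 = j.val ∨ j.val + 1 = i.val) :
    onForward r (i, j) + onForward r (j, i) = r (i, j) := by
  rcases hij with h | h
  · simp [onForward, h, show j.val + 1 ≠ i.val by omega]
  · simp [onForward, h, hr i j, show i.val + 1 ≠ j.val by omega]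

lemma sum_in_eq_sum_out_onForward_const (f : ℝ) {j : Fin K} (hTx : j ≠ (𝒫).Tx)
    (hRx : j ≠ (𝒫).Rx) :
    ∑ i ∈ {i | (i, j) ∈ (𝒫).E}, onForward (fun _ => f) (i, j)
      = ∑ k ∈ {k | (j, k) ∈ (𝒫).E}, onForward (fun _ => f) (j, k) := by
  have h0 : j.val ≠ 0 := fun h => hTx (Fin.ext h)
  have h1 : j.val ≠ K - 1 := fun h => hRx (Fin.ext h)
  have hprev : (⟨j.val - 1, by omega⟩ : Fin K).val + 1 = j.val := by simp; omega
  have hnext : j.val + 1 = (⟨j.val + 1, by omega⟩ : Fin K).val := rfl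
  obtain ⟨hin, hout⟩ := filter_mem_E_eq hK cap hcap A hprev hnext
  have hne : (⟨j.val - 1, by omega⟩ : Fin K) ≠ ⟨j.val + 1, by omega⟩ :=
    Fin.ne_of_val_ne (by dsimp only; omega)
  rw [hin, hout, Finset.sum_pair hne, Finset.sum_pair hne]
  simp only [onForward]
  split_ifs <;> first | omega | simp

theorem valid_onForward {f : ℝ} (hf0 : 0 ≤ f)
    (hf : ∀ i j, (i, j) ∈ (𝒫).E → f ≤ cap s(i, j)) :
    (𝒫).Valid (onForward fun _ => f) (onForward fun e => cap s(e.1, e.2) - f) := by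
  refine ⟨?_, ?_, onForward fun e => cap s(e.1, e.2), ?_, ?_, ?_, ?_, ?_,
    fun j => sum_in_eq_sum_out_onForward_const f⟩
  · intro e _
    unfold onForward
    split_ifs <;> simp [hf0]
  · rintro ⟨i, j⟩ hij
    unfold onForward
    split_ifs
    · linarith [hf i j hij]
    · rfl
  · intro e _
    unfold onForward
    split_ifs
    · exact hcap _
    · rfl
  · intro i j hij
    exact onForward_add_onForward_swap (fun i j => by rw [Sym2.eq_swap])
      ((mem_E hK cap hcap A).1 hij)
  · intro e _
    unfold onForward
    split_ifs <;> simp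
  · intro i _
    simp [onForward, pathNetwork]
  · intro j _
    have := j.isLt
    exact if_neg fun h => by simp [pathNetwork] at h; omega

theorem mem_Region_of_le_cap {f : ℝ} (hf0 : 0 ≤ f)
    (hf : ∀ i j, (i, j) ∈ (𝒫).E → f ≤ cap s(i, j)) :
    (∑ u ∈ (𝒫).UA, (cap u - f), f) ∈ (𝒫).Region := by
  refine ⟨_, _, valid_onForward hf0 hf, ?_, ?_⟩
  · rw [ISACNetwork.sensOf, ISACNetwork.sum_EA_eq_sum_UA]
    refine Finset.sum_congr rfl fun u hu => ?_
    obtain ⟨⟨i, j⟩, hij, rfl⟩ := Finset.mem_image.mp hu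
    exact onForward_add_onForward_swap (fun i j => by rw [Sym2.eq_swap])
      ((mem_E hK cap hcap A).1 (Finset.mem_filter.mp hij).1)
  · rw [flowOf_eq]
    simp [onForward]

end pathNetwork

theorem oneD_optimal_tradeoff_general {K : ℕ} (hK : 2 ≤ K) (cap : Sym2 (Fin K) → ℝ)
    (hcap : ∀ u, 0 ≤ cap u) (A : Finset (Fin K))
    (fstar : ℝ)
    (hfstar : IsGreatest
      {f : ℝ | ∃ s : ℝ, (s, f) ∈ (pathNetwork K hK cap hcap A).Region} fstar)
    (f : ℝ) (hf0 : 0 ≤ f) (hff : f ≤ fstar) :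
    IsGreatest {s : ℝ | (s, f) ∈ (pathNetwork K hK cap hcap A).Region}
      (∑ u ∈ (pathNetwork K hK cap hcap A).UA, cap u
        - ((pathNetwork K hK cap hcap A).UA.card : ℝ) * f) := by
  rw [← nsmul_eq_mul, ← Finset.sum_const, ← Finset.sum_sub_distrib]
  obtain ⟨-, fr, sr, hv, -, rfl⟩ := hfstar.1
  refine ⟨pathNetwork.mem_Region_of_le_cap hf0 fun i j hij =>
    hff.trans (pathNetwork.flowOf_le_cap hv hij), ?_⟩
  rintro s ⟨fr', sr', hv', rfl, rfl⟩
  exact pathNetwork.sensOf_le hv'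

/-- In a one-dimensional ISAC network with nonempty sensing link set `U(A)`,
for any fixed throughput `0 ≤ f ≤ f*`, the maximum sensing fidelity compatible
with throughput `f` is `Σ_{u ∈ U(A)} c_u − |U(A)| · f`. -/
theorem oneD_optimal_tradeoff {K : ℕ} (hK : 2 ≤ K) (cap : Sym2 (Fin K) → ℝ)
    (hcap : ∀ u, 0 ≤ cap u) (A : Finset (Fin K))
    (hUA : (pathNetwork K hK cap hcap A).UA.Nonempty)
    (fstar : ℝ)
    (hfstar : IsGreatest
      {f : ℝ | ∃ s : ℝ, (s, f) ∈ (pathNetwork K hK cap hcap A).Region} fstar)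
    (f : ℝ) (hf0 : 0 ≤ f) (hff : f ≤ fstar) :
    IsGreatest {s : ℝ | (s, f) ∈ (pathNetwork K hK cap hcap A).Region}
      (∑ u ∈ (pathNetwork K hK cap hcap A).UA, cap u
        - ((pathNetwork K hK cap hcap A).UA.card : ℝ) * f) :=
  oneD_optimal_tradeoff_general hK cap hcap A fstar hfstar f hf0 hff
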